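/- For the contracted diameter gadget (G',w'): if F(x,y)=1 then D_{G',w'} ≤ max{2α, β}, and if F(x,y)=0 then D_{G',w'} ≥ min{α+β, 3α}. -/

import Mathlib

open scoped ENNReal

set_option linter.unusedVariables false

/-- The length of a walk with respect to `ℝ≥0∞` edge weights. -/
noncomputable def wlen {V : Type*} (G : SimpleGraph V) (w : V → V → ℝ≥0∞) {u v : V}
    (p : G.Walk u v) : ℝ≥0∞ :=
  (p.darts.map fun d => w d.toProd.1 d.toProd.2).sum

/-- The weighted distance: the infimum of walk lengths. -/
noncomputable def wdist {V : Type*} (G : SimpleGraph V) (w : V → V → ℝ≥0∞) (u v : V) : ℝ≥0∞ :=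
  ⨅ p : G.Walk u v, wlen G w p

/-- Vertices of the contracted diameter gadget. -/
inductive CV (s ℓ : ℕ) where
  /-- the hub `t` -/
  | t
  /-- node `a^z_{j+1}` -/
  | ah (z : Bool) (j : Fin s)
  /-- node `a*_{j+1}` -/
  | as (j : Fin ℓ)
  /-- node `a_{i+1}` -/
  | a (i : Fin (2 ^ s))
  /-- node `b_{i+1}` -/
  | b (i : Fin (2 ^ s))
  deriving DecidableEq, Fintype

/-- Base (oriented) adjacency of the contracted diameter gadget.  Here `bin(i,j)` is
realized as `Nat.testBit` on the 0-based index, and `bin(i,j)⊕1` as its negation. -/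
def cAdj0 {s ℓ : ℕ} : CV s ℓ → CV s ℓ → Prop
  | .t, .ah _ _ => True
  | .t, .as _ => True
  | .a i, .ah z j => z = i.val.testBit j.val
  | .b i, .ah z j => z = !(i.val.testBit j.val)
  | .a i, .a i' => i ≠ i'
  | .b i, .b i' => i ≠ i'
  | .a _, .as _ => True
  | .b _, .as _ => True
  | _, _ => False

/-- The contracted diameter gadget graph. -/
def cGadget (s ℓ : ℕ) : SimpleGraph (CV s ℓ) where
  Adj u v := u ≠ v ∧ (cAdj0 u v ∨ cAdj0 v u)
  symm := ⟨fun u v huv => ⟨huv.1.symm, huv.2.symm⟩⟩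
  loopless := ⟨fun u hu => hu.1 rfl⟩

/-- The weights of the contracted diameter gadget: every edge has weight `α`,
except `a_i`–`a*_j` which has weight `α` if `x_{i,j}=1` and `β` otherwise, and
`b_i`–`a*_j` which has weight `α` if `y_{i,j}=1` and `β` otherwise. -/
def cW {s ℓ : ℕ} (x y : Fin (2 ^ s) → Fin ℓ → Bool) (α β : ℕ) : CV s ℓ → CV s ℓ → ℕ
  | .a i, .as j => if x i j then α else β
  | .as j, .a i => if x i j then α else β
  | .b i, .as j => if y i j then α else β
  | .as j, .b i => if y i j then α else β
  | _, _ => α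

/-- Weighted diameter `D_{G,w} = max_{u,v} d_{G,w}(u,v)`. -/
noncomputable def wdiam {V : Type*} (G : SimpleGraph V) (w : V → V → ℝ≥0∞) : ℝ≥0∞ :=
  ⨆ u, ⨆ v, wdist G w u v

/-!
`t` is joined to every `a^z_j` and `a*_j` by an `α`-edge, each `a^z_j` is reached from any `a_i`
(resp. `b_i`) in at most two `α`-edges by flipping bit `j` inside the clique, and `a_i`, `b_{i'}`
with `i ≠ i'` share the neighbour of a bit where `i` and `i'` differ. So all distances are at most
`max {2α, β}` except possibly `d(a_i, b_i)`, which is at most `2α` when some `x_{i,j} = y_{i,j} = 1`.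
Conversely `a_i` and `b_i` are attached to complementary bits, so their only common neighbours
are the `a*_j`: a walk between them either has two edges through some `a*_j`, costing at least
`α + β` when no `j` has `x_{i,j} = y_{i,j} = 1`, or at least three edges of weight `≥ α`.
-/

section WeightedDistance

variable {V : Type*} {G : SimpleGraph V} {w : V → V → ℝ≥0∞}

@[simp]
lemma wlen_nil {u : V} : wlen G w (SimpleGraph.Walk.nil : G.Walk u u) = 0 := rfl

@[simp]
lemma wlen_cons {u v z : V} (h : G.Adj u v) (p : G.Walk v z) :
    wlen G w (.cons h p) = w u v + wlen G w p := by
  simp [wlen]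

lemma wlen_reverse (hw : ∀ u v, w u v = w v u) {u v : V} (p : G.Walk u v) :
    wlen G w p.reverse = wlen G w p := by
  simp [wlen, List.sum_reverse, Function.comp_def, hw]

lemma length_mul_le_wlen {c : ℝ≥0∞} (hc : ∀ u v, G.Adj u v → c ≤ w u v) {u v : V}
    (p : G.Walk u v) : p.length * c ≤ wlen G w p := by
  induction p with
  | nil => simp
  | cons h p ih =>
    rw [wlen_cons, SimpleGraph.Walk.length_cons, Nat.cast_succ, add_mul, one_mul, add_comm]
    exact add_le_add (hc _ _ h) ih

lemma wdist_le_wlen {u v : V} (p : G.Walk u v) : wdist G w u v ≤ wlen G w p := iInf_le _ p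

@[simp]
lemma wdist_self (u : V) : wdist G w u u = 0 :=
  nonpos_iff_eq_zero.mp (wdist_le_wlen .nil)

lemma wdist_comm (hw : ∀ u v, w u v = w v u) (u v : V) : wdist G w u v = wdist G w v u := by
  suffices h : ∀ u v, wdist G w u v ≤ wdist G w v u from le_antisymm (h u v) (h v u)
  exact fun u v => le_iInf fun p => (wdist_le_wlen p.reverse).trans_eq (wlen_reverse hw p)

lemma wdist_le_of_adj {u v : V} (h : G.Adj u v) : wdist G w u v ≤ w u v := by
  simpa using wdist_le_wlen (.cons h .nil)

lemma wdist_le_of_adj_of_adj {u m v : V} (h₁ : G.Adj u m) (h₂ : G.Adj m v) :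
    wdist G w u v ≤ w u m + w m v := by
  simpa using wdist_le_wlen (.cons h₁ (.cons h₂ .nil))

lemma wdist_le_wdiam (u v : V) : wdist G w u v ≤ wdiam G w :=
  le_iSup₂ (f := fun u v => wdist G w u v) u v

lemma wdiam_le {c : ℝ≥0∞} (h : ∀ u v, wdist G w u v ≤ c) : wdiam G w ≤ c :=
  iSup₂_le h

end WeightedDistance

namespace Fin

lemma exists_testBit_ne {s : ℕ} {i i' : Fin (2 ^ s)} (h : i ≠ i') :
    ∃ j : Fin s, i.val.testBit j ≠ i'.val.testBit j := by
  by_contra! hbits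
  refine h (Fin.ext (Nat.eq_of_testBit_eq fun k => ?_))
  by_cases hk : k < s
  · exact hbits ⟨k, hk⟩
  · have hle : 2 ^ s ≤ 2 ^ k := Nat.pow_le_pow_right two_pos (not_lt.mp hk)
    rw [Nat.testBit_eq_false_of_lt (i.isLt.trans_le hle),
      Nat.testBit_eq_false_of_lt (i'.isLt.trans_le hle)]

lemma exists_ne_testBit_eq_not {s : ℕ} (i : Fin (2 ^ s)) (j : Fin s) :
    ∃ i' : Fin (2 ^ s), i ≠ i' ∧ i'.val.testBit j = !i.val.testBit j := by
  have hlt : 2 ^ j.val < 2 ^ s := Nat.pow_lt_pow_right one_lt_two j.isLt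
  have hbit : (i.val ^^^ 2 ^ j.val).testBit j = !i.val.testBit j := by
    simp [Nat.testBit_xor, Nat.testBit_two_pow_self]
  refine ⟨⟨_, Nat.xor_lt_two_pow i.isLt hlt⟩, fun h => ?_, hbit⟩
  have := congrArg (fun k : Fin (2 ^ s) => k.val.testBit j) h
  simp only [hbit] at this
  simp at this

end Fin

namespace cGadget

variable {s ℓ : ℕ}

lemma adj_t_ah (z : Bool) (j : Fin s) : (cGadget s ℓ).Adj .t (.ah z j) :=
  ⟨nofun, .inl trivial⟩

lemma adj_t_as (j : Fin ℓ) : (cGadget s ℓ).Adj .t (.as j) :=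
  ⟨nofun, .inl trivial⟩

lemma adj_a_ah {i : Fin (2 ^ s)} {z : Bool} {j : Fin s} (h : z = i.val.testBit j) :
    (cGadget s ℓ).Adj (.a i) (.ah z j) :=
  ⟨nofun, .inl h⟩

lemma adj_b_ah {i : Fin (2 ^ s)} {z : Bool} {j : Fin s} (h : z = !i.val.testBit j) :
    (cGadget s ℓ).Adj (.b i) (.ah z j) :=
  ⟨nofun, .inl h⟩

lemma adj_a_a {i i' : Fin (2 ^ s)} (h : i ≠ i') : (cGadget s ℓ).Adj (.a i) (.a i') :=
  ⟨fun he => h (CV.a.inj he), .inl h⟩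

lemma adj_b_b {i i' : Fin (2 ^ s)} (h : i ≠ i') : (cGadget s ℓ).Adj (.b i) (.b i') :=
  ⟨fun he => h (CV.b.inj he), .inl h⟩

lemma adj_a_as (i : Fin (2 ^ s)) (j : Fin ℓ) : (cGadget s ℓ).Adj (.a i) (.as j) :=
  ⟨nofun, .inl trivial⟩

lemma adj_b_as (i : Fin (2 ^ s)) (j : Fin ℓ) : (cGadget s ℓ).Adj (.b i) (.as j) :=
  ⟨nofun, .inl trivial⟩

lemma not_adj_a_b (i i' : Fin (2 ^ s)) : ¬(cGadget s ℓ).Adj (.a i) (.b i') := by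
  rintro ⟨-, h | h⟩ <;> exact h

lemma eq_as_of_adj_a_of_adj_b {i : Fin (2 ^ s)} {v : CV s ℓ} (h₁ : (cGadget s ℓ).Adj (.a i) v)
    (h₂ : (cGadget s ℓ).Adj v (.b i)) : ∃ j, v = .as j := by
  rcases v with _ | ⟨z, j⟩ | j | _ | _
  all_goals simp only [cGadget, cAdj0] at h₁ h₂
  all_goals simp_all


variable (x y : Fin (2 ^ s) → Fin ℓ → Bool) (α β : ℕ)

abbrev weight : CV s ℓ → CV s ℓ → ℝ≥0∞ := fun p q => (cW x y α β p q : ℝ≥0∞)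

variable {x y α β}

lemma weight_comm (u v : CV s ℓ) : weight x y α β u v = weight x y α β v u := by
  cases u <;> cases v <;> rfl

lemma cW_le_max (u v : CV s ℓ) : cW x y α β u v ≤ max (2 * α) β := by
  cases u <;> cases v <;> simp only [cW] <;> (try split_ifs) <;> omega

lemma le_cW (hαβ : α ≤ β) (u v : CV s ℓ) : α ≤ cW x y α β u v := by
  cases u <;> cases v <;> simp only [cW] <;> (try split_ifs) <;> omega

lemma wdist_le_max_of_adj {u v : CV s ℓ} (h : (cGadget s ℓ).Adj u v) :
    wdist (cGadget s ℓ) (weight x y α β) u v ≤ (max (2 * α) β : ℕ) :=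
  (wdist_le_of_adj h).trans (Nat.cast_le.mpr (cW_le_max u v))

lemma wdist_le_max_of_adj_of_adj {u m v : CV s ℓ} (h₁ : (cGadget s ℓ).Adj u m)
    (h₂ : (cGadget s ℓ).Adj m v) (hw₁ : cW x y α β u m = α) (hw₂ : cW x y α β m v = α) :
    wdist (cGadget s ℓ) (weight x y α β) u v ≤ (max (2 * α) β : ℕ) := by
  refine (wdist_le_of_adj_of_adj h₁ h₂).trans ?_
  simp only [weight, hw₁, hw₂]
  exact_mod_cast (by omega : α + α ≤ max (2 * α) β)

lemma wdist_t_le (hs : 1 ≤ s) (v : CV s ℓ) :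
    wdist (cGadget s ℓ) (weight x y α β) .t v ≤ (max (2 * α) β : ℕ) := by
  obtain ⟨j₀⟩ : Nonempty (Fin s) := ⟨⟨0, hs⟩⟩
  cases v with
  | t => simp
  | ah z j => exact wdist_le_max_of_adj (adj_t_ah z j)
  | as j => exact wdist_le_max_of_adj (adj_t_as j)
  | a i => exact wdist_le_max_of_adj_of_adj (adj_t_ah _ j₀) (adj_a_ah rfl).symm rfl rfl
  | b i => exact wdist_le_max_of_adj_of_adj (adj_t_ah _ j₀) (adj_b_ah rfl).symm rfl rfl

lemma wdist_ah_a_le (z : Bool) (j : Fin s) (i : Fin (2 ^ s)) :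
    wdist (cGadget s ℓ) (weight x y α β) (.ah z j) (.a i) ≤ (max (2 * α) β : ℕ) := by
  by_cases hz : z = i.val.testBit j
  · exact wdist_le_max_of_adj (adj_a_ah hz).symm
  · obtain ⟨i', hne, hbit⟩ := Fin.exists_ne_testBit_eq_not i j
    have hz' : z = i'.val.testBit j := by rw [hbit]; cases z <;> simp_all
    exact wdist_le_max_of_adj_of_adj (adj_a_ah hz').symm (adj_a_a hne.symm) rfl rfl

lemma wdist_ah_b_le (z : Bool) (j : Fin s) (i : Fin (2 ^ s)) :
    wdist (cGadget s ℓ) (weight x y α β) (.ah z j) (.b i) ≤ (max (2 * α) β : ℕ) := by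
  by_cases hz : z = !i.val.testBit j
  · exact wdist_le_max_of_adj (adj_b_ah hz).symm
  · obtain ⟨i', hne, hbit⟩ := Fin.exists_ne_testBit_eq_not i j
    have hz' : z = !i'.val.testBit j := by rw [hbit]; cases z <;> simp_all
    exact wdist_le_max_of_adj_of_adj (adj_b_ah hz').symm (adj_b_b hne.symm) rfl rfl

lemma wdist_ah_le (hs : 1 ≤ s) (z : Bool) (j : Fin s) (v : CV s ℓ) :
    wdist (cGadget s ℓ) (weight x y α β) (.ah z j) v ≤ (max (2 * α) β : ℕ) := by
  cases v with
  | t => exact wdist_comm weight_comm _ _ ▸ wdist_t_le hs _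
  | ah z' j' => exact wdist_le_max_of_adj_of_adj (adj_t_ah z j).symm (adj_t_ah z' j') rfl rfl
  | as j' => exact wdist_le_max_of_adj_of_adj (adj_t_ah z j).symm (adj_t_as j') rfl rfl
  | a i => exact wdist_ah_a_le z j i
  | b i => exact wdist_ah_b_le z j i

lemma wdist_as_le (hs : 1 ≤ s) (j : Fin ℓ) (v : CV s ℓ) :
    wdist (cGadget s ℓ) (weight x y α β) (.as j) v ≤ (max (2 * α) β : ℕ) := by
  cases v with
  | t => exact wdist_comm weight_comm _ _ ▸ wdist_t_le hs _
  | ah z' j' => exact wdist_comm weight_comm _ _ ▸ wdist_ah_le hs z' j' _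
  | as j' => exact wdist_le_max_of_adj_of_adj (adj_t_as j).symm (adj_t_as j') rfl rfl
  | a i => exact wdist_le_max_of_adj (adj_a_as i j).symm
  | b i => exact wdist_le_max_of_adj (adj_b_as i j).symm

lemma wdist_a_le (hs : 1 ≤ s) (hF : ∀ i, ∃ j, x i j = true ∧ y i j = true)
    (i : Fin (2 ^ s)) (v : CV s ℓ) :
    wdist (cGadget s ℓ) (weight x y α β) (.a i) v ≤ (max (2 * α) β : ℕ) := by
  cases v with
  | t => exact wdist_comm weight_comm _ _ ▸ wdist_t_le hs _
  | ah z' j' => exact wdist_comm weight_comm _ _ ▸ wdist_ah_le hs z' j' _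
  | as j' => exact wdist_comm weight_comm _ _ ▸ wdist_as_le hs j' _
  | a i' =>
    obtain rfl | hne := eq_or_ne i i'
    · simp
    · exact wdist_le_max_of_adj (adj_a_a hne)
  | b i' =>
    obtain rfl | hne := eq_or_ne i i'
    · obtain ⟨j, hx, hy⟩ := hF i
      exact wdist_le_max_of_adj_of_adj (adj_a_as i j) (adj_b_as i j).symm
        (by simp [cW, hx]) (by simp [cW, hy])
    · obtain ⟨j, hj⟩ := Fin.exists_testBit_ne hne
      have hz : i.val.testBit j = !i'.val.testBit j := Bool.eq_not_iff.mpr hj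
      exact wdist_le_max_of_adj_of_adj (adj_a_ah rfl) (adj_b_ah hz).symm rfl rfl

lemma wdist_b_le (hs : 1 ≤ s) (hF : ∀ i, ∃ j, x i j = true ∧ y i j = true)
    (i : Fin (2 ^ s)) (v : CV s ℓ) :
    wdist (cGadget s ℓ) (weight x y α β) (.b i) v ≤ (max (2 * α) β : ℕ) := by
  cases v with
  | t => exact wdist_comm weight_comm _ _ ▸ wdist_t_le hs _
  | ah z' j' => exact wdist_comm weight_comm _ _ ▸ wdist_ah_le hs z' j' _
  | as j' => exact wdist_comm weight_comm _ _ ▸ wdist_as_le hs j' _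
  | a i' => exact wdist_comm weight_comm _ _ ▸ wdist_a_le hs hF i' _
  | b i' =>
    obtain rfl | hne := eq_or_ne i i'
    · simp
    · exact wdist_le_max_of_adj (adj_b_b hne)

lemma wdiam_le_max (hs : 1 ≤ s) (hF : ∀ i, ∃ j, x i j = true ∧ y i j = true) :
    wdiam (cGadget s ℓ) (weight x y α β) ≤ (max (2 * α) β : ℕ) := by
  refine wdiam_le fun u v => ?_
  cases u with
  | t => exact wdist_t_le hs v
  | ah z j => exact wdist_ah_le hs z j v
  | as j => exact wdist_as_le hs j v
  | a i => exact wdist_a_le hs hF i v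
  | b i => exact wdist_b_le hs hF i v

lemma min_le_wdist_a_b (hαβ : α ≤ β) {i : Fin (2 ^ s)}
    (hi : ¬∃ j, x i j = true ∧ y i j = true) :
    ((min (α + β) (3 * α) : ℕ) : ℝ≥0∞) ≤ wdist (cGadget s ℓ) (weight x y α β) (.a i) (.b i) := by
  refine le_iInf fun p => ?_
  obtain hlong | hshort := le_or_gt 3 p.length
  · calc ((min (α + β) (3 * α) : ℕ) : ℝ≥0∞) ≤ (3 * α : ℕ) := Nat.cast_le.mpr (min_le_right _ _)
      _ ≤ p.length * (α : ℝ≥0∞) := by exact_mod_cast Nat.mul_le_mul_right α hlong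
      _ ≤ wlen _ _ p := length_mul_le_wlen (fun u v _ => Nat.cast_le.mpr (le_cW hαβ u v)) p
  · rcases p with _ | ⟨h₁, _ | ⟨h₂, _ | ⟨h₃, q⟩⟩⟩
    · exact absurd h₁ (not_adj_a_b i i)
    · obtain ⟨j, rfl⟩ := eq_as_of_adj_a_of_adj_b h₁ h₂
      have hj : α + β ≤ cW x y α β (.a i) (.as j) + cW x y α β (.as j) (.b i) := by
        have hxy := not_and.mp (not_exists.mp hi j)
        simp only [cW]
        split_ifs with hx hy
        · exact absurd hy (hxy hx)
        all_goals omega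
      simp only [wlen_cons, wlen_nil, add_zero, weight]
      exact_mod_cast (min_le_left _ _).trans hj
    · simp only [SimpleGraph.Walk.length_cons] at hshort
      omega

end cGadget

theorem stmt7_general (s ℓ : ℕ) (hs : 1 ≤ s)
    (α β : ℕ) (hαβ : α ≤ β)
    (x y : Fin (2 ^ s) → Fin ℓ → Bool) :
    ((∀ i : Fin (2 ^ s), ∃ j : Fin ℓ, x i j = true ∧ y i j = true) →
      wdiam (cGadget s ℓ) (fun p q => ((cW x y α β p q : ℕ) : ℝ≥0∞)) ≤
        ((max (2 * α) β : ℕ) : ℝ≥0∞)) ∧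
    ((¬ ∀ i : Fin (2 ^ s), ∃ j : Fin ℓ, x i j = true ∧ y i j = true) →
      ((min (α + β) (3 * α) : ℕ) : ℝ≥0∞) ≤
        wdiam (cGadget s ℓ) (fun p q => ((cW x y α β p q : ℕ) : ℝ≥0∞))) := by
  refine ⟨cGadget.wdiam_le_max hs, fun hF => ?_⟩
  obtain ⟨i, hi⟩ := not_forall.mp hF
  exact (cGadget.min_le_wdist_a_b hαβ hi).trans (wdist_le_wdiam _ _)

/-- For the contracted diameter gadget `(G',w')`: if `F(x,y)=1` then
`D_{G',w'} ≤ max{2α, β}`, and if `F(x,y)=0` then `D_{G',w'} ≥ min{α+β, 3α}`, where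
`F(x,y) = ⋀_i ⋁_j (x_{i,j} ∧ y_{i,j})`. -/
theorem stmt7 (s ℓ : ℕ) (hs : 1 ≤ s) (hℓ : 1 ≤ ℓ)
    (α β : ℕ) (hα : 0 < α) (hαβ : α ≤ β)
    (x y : Fin (2 ^ s) → Fin ℓ → Bool) :
    ((∀ i : Fin (2 ^ s), ∃ j : Fin ℓ, x i j = true ∧ y i j = true) →
      wdiam (cGadget s ℓ) (fun p q => ((cW x y α β p q : ℕ) : ℝ≥0∞)) ≤
        ((max (2 * α) β : ℕ) : ℝ≥0∞)) ∧
    ((¬ ∀ i : Fin (2 ^ s), ∃ j : Fin ℓ, x i j = true ∧ y i j = true) →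
      ((min (α + β) (3 * α) : ℕ) : ℝ≥0∞) ≤
        wdiam (cGadget s ℓ) (fun p q => ((cW x y α β p q : ℕ) : ℝ≥0∞))) :=
  stmt7_general s ℓ hs α β hαβ x y
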